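/- For each dimension p ≥ 1 there exists a finite constant κ_p, depending only on p, such that for all x, y, y' ∈ ℝ^p, ‖((x−y)(x−y)ᵀ)^{1/2} − ((x−y')(x−y')ᵀ)^{1/2}‖_F ≤ κ_p ‖y − y'‖. Equivalently, the map z ↦ (z zᵀ)^{1/2} = z zᵀ/‖z‖ (set to 0 at z = 0) is Lipschitz on ℝ^p with constant κ_p. -/

import Mathlib

open Matrix MeasureTheory ProbabilityTheory

noncomputable def eunorm {p : ℕ} (x : Fin p → ℝ) : ℝ := Real.sqrt (∑ i, x i ^ 2)

noncomputable def frob {p : ℕ} (M : Matrix (Fin p) (Fin p) ℝ) : ℝ :=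
  Real.sqrt (∑ i, ∑ j, M i j ^ 2)

open Classical in
noncomputable def msqrt {p : ℕ} (A : Matrix (Fin p) (Fin p) ℝ) : Matrix (Fin p) (Fin p) ℝ :=
  if h : A.PosSemidef then
    (h.1.eigenvectorUnitary : Matrix (Fin p) (Fin p) ℝ) *
      diagonal ((↑) ∘ (fun x => Real.sqrt x) ∘ h.1.eigenvalues) *
      (star h.1.eigenvectorUnitary : Matrix (Fin p) (Fin p) ℝ)
  else 0

noncomputable def dS {p : ℕ} (A B : Matrix (Fin p) (Fin p) ℝ) : ℝ := frob (msqrt A - msqrt B)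

noncomputable def mExp {p : ℕ} {Ωs : Type*} [MeasurableSpace Ωs] (μ : Measure Ωs)
    (F : Ωs → Matrix (Fin p) (Fin p) ℝ) : Matrix (Fin p) (Fin p) ℝ :=
  Matrix.of fun i j => ∫ ω, F ω i j ∂μ

noncomputable def covDS {p : ℕ} {Ωs : Type*} [MeasurableSpace Ωs] (μ : Measure Ωs)
    (Y : Ωs → Fin p → ℝ) : Matrix (Fin p) (Fin p) ℝ :=
  (mExp μ fun ω => msqrt (vecMulVec (Y ω - fun r => ∫ ω', Y ω' r ∂μ) (Y ω - fun r => ∫ ω', Y ω' r ∂μ))) *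
  (mExp μ fun ω => msqrt (vecMulVec (Y ω - fun r => ∫ ω', Y ω' r ∂μ) (Y ω - fun r => ∫ ω', Y ω' r ∂μ)))

open WithLp
open scoped NNReal Matrix.Norms.Frobenius

/-! For `z ≠ 0`, `(z zᵀ)² = ‖z‖² z zᵀ`, so `(z zᵀ)^{1/2} = ‖z‖⁻¹ z zᵀ`. If `B` is
bilinear with `‖B v w‖ ≤ C ‖v‖ ‖w‖`, then `v ↦ ‖v‖⁻¹ B v v` is `3C`-Lipschitz: if `‖w‖ ≤ ‖v‖`, write
`‖v‖⁻¹ B v v - ‖w‖⁻¹ B w w = ‖v‖⁻¹ B (v - w) v + ‖v‖⁻¹ B w (v - w) + (‖v‖⁻¹ - ‖w‖⁻¹) B w w`;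
each term is at most `C ‖v - w‖`, the last because `(‖w‖⁻¹ - ‖v‖⁻¹) ‖w‖² ≤ ‖v‖ - ‖w‖`.
For `B = vecMulVec` with the Frobenius norm, `C = 1`, so `κ_p = 3`. -/

namespace LinearMap

variable {E F : Type*} [SeminormedAddCommGroup E] [NormedSpace ℝ E]
  [SeminormedAddCommGroup F] [NormedSpace ℝ F] (B : E →ₗ[ℝ] E →ₗ[ℝ] F)

theorem inv_norm_smul_apply_self_sub (v w : E) :
    ‖v‖⁻¹ • B v v - ‖w‖⁻¹ • B w w =
      ‖v‖⁻¹ • B (v - w) v + ‖v‖⁻¹ • B w (v - w) + (‖v‖⁻¹ - ‖w‖⁻¹) • B w w := by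
  simp only [map_sub, LinearMap.sub_apply, smul_sub, sub_smul]
  abel

variable {B} {C : ℝ≥0} (hB : ∀ x y, ‖B x y‖ ≤ C * ‖x‖ * ‖y‖)
include hB

theorem norm_inv_norm_smul_apply_self_sub_le_of_norm_le {v w : E} (h : ‖w‖ ≤ ‖v‖) :
    ‖‖v‖⁻¹ • B v v - ‖w‖⁻¹ • B w w‖ ≤ 3 * C * ‖v - w‖ := by
  have hv_le : ‖v‖ / ‖v‖ ≤ 1 := div_self_le_one _
  have hw_le : ‖w‖ / ‖v‖ ≤ 1 := div_le_one_of_le₀ h (norm_nonneg v)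
  have h₁ : ‖‖v‖⁻¹ • B (v - w) v‖ ≤ C * ‖v - w‖ := by
    calc ‖‖v‖⁻¹ • B (v - w) v‖ ≤ ‖v‖⁻¹ * (C * ‖v - w‖ * ‖v‖) := by
          rw [norm_smul, norm_inv, norm_norm]; gcongr; exact hB _ _
      _ = ‖v‖ / ‖v‖ * (C * ‖v - w‖) := by ring
      _ ≤ C * ‖v - w‖ := mul_le_of_le_one_left (by positivity) hv_le
  have h₂ : ‖‖v‖⁻¹ • B w (v - w)‖ ≤ C * ‖v - w‖ := by
    calc ‖‖v‖⁻¹ • B w (v - w)‖ ≤ ‖v‖⁻¹ * (C * ‖w‖ * ‖v - w‖) := by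
          rw [norm_smul, norm_inv, norm_norm]; gcongr; exact hB _ _
      _ = ‖w‖ / ‖v‖ * (C * ‖v - w‖) := by ring
      _ ≤ C * ‖v - w‖ := mul_le_of_le_one_left (by positivity) hw_le
  have h₃ : ‖(‖v‖⁻¹ - ‖w‖⁻¹) • B w w‖ ≤ C * ‖v - w‖ := by
    calc ‖(‖v‖⁻¹ - ‖w‖⁻¹) • B w w‖ ≤ |‖v‖⁻¹ - ‖w‖⁻¹| * (C * ‖w‖ * ‖w‖) := by
          rw [norm_smul, Real.norm_eq_abs]; gcongr; exact hB _ _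
      _ = C * ((‖v‖ - ‖w‖) * (‖w‖ / ‖v‖)) := by
          rcases (norm_nonneg w).eq_or_lt with hw | hw
          · simp [← hw]
          · have hv := hw.trans_le h
            rw [abs_of_nonpos (sub_nonpos.2 (inv_anti₀ hw h))]
            field_simp
            ring
      _ ≤ C * ‖v - w‖ := by
          gcongr
          calc (‖v‖ - ‖w‖) * (‖w‖ / ‖v‖) ≤ ‖v‖ - ‖w‖ :=
                mul_le_of_le_one_right (sub_nonneg.2 h) hw_le
            _ ≤ ‖v - w‖ := norm_sub_norm_le v w
  calc _ = ‖_ + _ + _‖ := by rw [inv_norm_smul_apply_self_sub]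
    _ ≤ _ := norm_add₃_le
    _ ≤ 3 * C * ‖v - w‖ := by linarith

theorem lipschitzWith_inv_norm_smul_apply_self :
    LipschitzWith (3 * C) fun v => ‖v‖⁻¹ • B v v := by
  refine LipschitzWith.of_dist_le_mul fun v w => ?_
  simp only [dist_eq_norm, NNReal.coe_mul, NNReal.coe_ofNat]
  rcases le_total ‖w‖ ‖v‖ with h | h
  · exact norm_inv_norm_smul_apply_self_sub_le_of_norm_le hB h
  · rw [norm_sub_rev, norm_sub_rev v]
    exact norm_inv_norm_smul_apply_self_sub_le_of_norm_le hB h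

end LinearMap

theorem eunorm_eq_sqrt_dotProduct {p : ℕ} (z : Fin p → ℝ) : eunorm z = √(z ⬝ᵥ z) := by
  simp [eunorm, dotProduct, sq]

open scoped MatrixOrder in
theorem msqrt_eq_cfcSqrt {p : ℕ} {A : Matrix (Fin p) (Fin p) ℝ} (hA : A.PosSemidef) :
    msqrt A = CFC.sqrt A := by
  rw [CFC.sqrt_eq_cfc, cfc_nnreal_eq_real _ _ hA.nonneg, hA.1.cfc_eq, msqrt, dif_pos hA]
  simp only [IsHermitian.cfc, Unitary.conjStarAlgAut_apply, RCLike.ofReal_real_eq_id]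
  unfold Real.sqrt
  rfl

open scoped MatrixOrder in
theorem msqrt_vecMulVec_self {p : ℕ} (z : Fin p → ℝ) :
    msqrt (vecMulVec z z) = (eunorm z)⁻¹ • vecMulVec z z := by
  have hM : (vecMulVec z z).PosSemidef := by simpa using posSemidef_vecMulVec_self_star z
  rw [msqrt_eq_cfcSqrt hM]
  have hc : 0 ≤ (eunorm z)⁻¹ := inv_nonneg.2 (Real.sqrt_nonneg _)
  refine CFC.sqrt_unique ?_ (nonneg_iff_posSemidef.2 (hM.smul hc))
  rw [smul_mul_smul, vecMulVec_mul_vecMulVec, vecMulVec_smul, smul_smul, eunorm_eq_sqrt_dotProduct]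
  rcases eq_or_ne z 0 with rfl | hz
  · simp
  · have hd : 0 < z ⬝ᵥ z := lt_of_le_of_ne (by simpa using dotProduct_star_self_nonneg z)
      (Ne.symm (dotProduct_self_eq_zero.not.2 hz))
    rw [← mul_inv, Real.mul_self_sqrt hd.le, inv_mul_cancel₀ hd.ne', one_smul]

theorem eunorm_eq_norm {p : ℕ} (z : Fin p → ℝ) : eunorm z = ‖toLp 2 z‖ := by
  simp [eunorm, EuclideanSpace.norm_eq]

theorem frob_eq_norm {p : ℕ} (M : Matrix (Fin p) (Fin p) ℝ) : frob M = ‖M‖ := by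
  simp [frob, frobenius_norm_def, Real.sqrt_eq_rpow]

theorem Matrix.frobenius_norm_vecMulVec_le {m n 𝕜 : Type*} [Fintype m] [Fintype n] [RCLike 𝕜]
    (v : m → 𝕜) (w : n → 𝕜) : ‖vecMulVec v w‖ ≤ ‖toLp 2 v‖ * ‖toLp 2 w‖ := by
  rw [vecMulVec_eq Unit, ← frobenius_norm_replicateCol (ι := Unit) v,
    ← frobenius_norm_replicateRow (ι := Unit) w]
  exact frobenius_norm_mul _ _

theorem frob_msqrt_vecMulVec_self_sub_le {p : ℕ} (z z' : Fin p → ℝ) :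
    frob (msqrt (vecMulVec z z) - msqrt (vecMulVec z' z')) ≤ 3 * eunorm (z - z') := by
  let e := (WithLp.linearEquiv 2 ℝ (Fin p → ℝ)).toLinearMap
  let B := (vecMulVecBilin ℝ ℝ).compl₁₂ e e
  have hB_apply : ∀ v w, B v w = vecMulVec (ofLp v) (ofLp w) := fun _ _ => rfl
  have hB : ∀ v w, ‖B v w‖ ≤ (1 : ℝ≥0) * ‖v‖ * ‖w‖ := fun v w => by
    simpa [hB_apply] using frobenius_norm_vecMulVec_le (ofLp v) (ofLp w)
  have := (B.lipschitzWith_inv_norm_smul_apply_self hB).dist_le_mul (toLp 2 z) (toLp 2 z')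
  simpa [frob_eq_norm, eunorm_eq_norm, msqrt_vecMulVec_self, dist_eq_norm, hB_apply] using this

theorem stmt6_general (p : ℕ) :
    ∃ κ : ℝ, 0 ≤ κ ∧
      (∀ x y y' : Fin p → ℝ,
        frob (msqrt (vecMulVec (x - y) (x - y)) - msqrt (vecMulVec (x - y') (x - y'))) ≤
          κ * eunorm (y - y')) ∧
      (∀ z z' : Fin p → ℝ,
        frob (msqrt (vecMulVec z z) - msqrt (vecMulVec z' z')) ≤ κ * eunorm (z - z')) := by
  refine ⟨3, by norm_num, fun x y y' => ?_, frob_msqrt_vecMulVec_self_sub_le⟩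
  simpa [eunorm_eq_norm, norm_sub_rev (toLp 2 y)] using
    frob_msqrt_vecMulVec_self_sub_le (x - y) (x - y')

/-- For each dimension `p ≥ 1` there is a finite constant `κ_p` such that
`z ↦ (z zᵀ)^{1/2}` is `κ_p`-Lipschitz on `ℝ^p` (Frobenius norm on matrices, Euclidean norm on
vectors); equivalently `‖((x−y)(x−y)ᵀ)^{1/2} − ((x−y')(x−y')ᵀ)^{1/2}‖_F ≤ κ_p ‖y − y'‖`. -/
theorem stmt6 (p : ℕ) (hp : 1 ≤ p) :
    ∃ κ : ℝ, 0 ≤ κ ∧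
      (∀ x y y' : Fin p → ℝ,
        frob (msqrt (vecMulVec (x - y) (x - y)) - msqrt (vecMulVec (x - y') (x - y'))) ≤
          κ * eunorm (y - y')) ∧
      (∀ z z' : Fin p → ℝ,
        frob (msqrt (vecMulVec z z) - msqrt (vecMulVec z' z')) ≤ κ * eunorm (z - z')) :=
  stmt6_general p
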